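/- Localization of the continuous-time temporal PageRank: for each t, if P(t) is row-stochastic, λ(t) ∈ (0,1), v(t) is a probability vector, and π(t) is the unique normalized positive vector with π(t)^T G(t) = π(t)^T where G(t) = λ(t)P(t) + (1−λ(t))e v(t)^T, then for every node i, min_j (X(t))_{ji} ≤ π_i(t) ≤ (X(t))_{ii}, where X(t) = (1−λ(t))(Id − λ(t)P(t))^{-1}. -/

import Mathlib

/-! Because π is stationary and sums to one, `π (1 - λP) = (1 - λ) v`, so `π = v X` is a convex
combination of the rows of `X` and `π i` lies between the extreme entries of column `i` of `X`.
The largest one is the diagonal entry, by a discrete maximum principle: the column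
`u = (1 - λP)⁻¹ eᵢ` satisfies `u = eᵢ + λ P u`, so at a maximum `j ≠ i` we would have
`u j ≤ λ u j`, forcing `u ≤ 0 ≤ u i`. The same principle gives `u ≥ 0` and the invertibility
of `1 - λP`. -/

open Finset Matrix

namespace Matrix

variable {ι : Type*} [Fintype ι]

theorem dotProduct_le_of_forall_le {w u : ι → ℝ} {c : ℝ} (hw : ∀ k, 0 ≤ w k)
    (hw1 : ∑ k, w k = 1) (hu : ∀ k, u k ≤ c) : w ⬝ᵥ u ≤ c :=
  calc w ⬝ᵥ u ≤ ∑ k, w k * c := sum_le_sum fun k _ => mul_le_mul_of_nonneg_left (hu k) (hw k)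
    _ = c := by rw [← sum_mul, hw1, one_mul]

theorem le_dotProduct_of_forall_le {w u : ι → ℝ} {c : ℝ} (hw : ∀ k, 0 ≤ w k)
    (hw1 : ∑ k, w k = 1) (hu : ∀ k, c ≤ u k) : c ≤ w ⬝ᵥ u :=
  calc c = ∑ k, w k * c := by rw [← sum_mul, hw1, one_mul]
    _ ≤ w ⬝ᵥ u := sum_le_sum fun k _ => mul_le_mul_of_nonneg_left (hu k) (hw k)

variable [DecidableEq ι]

theorem vecMul_one_sub_smul_eq_of_vecMul_eq_self {R : Type*} [CommRing R]
    {P G : Matrix ι ι R} {l : R} {v π : ι → R}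
    (hG : ∀ i j, G i j = l * P i j + (1 - l) * v j) (hπ1 : ∑ i, π i = 1) (hfix : π ᵥ* G = π) :
    π ᵥ* (1 - l • P) = (1 - l) • v := by
  ext j
  have hj := congrFun hfix j
  simp only [vecMul, dotProduct, hG, mul_add, sum_add_distrib] at hj
  simp only [vecMul, dotProduct, sub_apply, one_apply, smul_apply, mul_sub, mul_ite, mul_one,
    mul_zero, sum_sub_distrib, sum_ite_eq', mem_univ, if_true, Pi.smul_apply, smul_eq_mul]
  rw [← sum_mul, hπ1] at hj
  linear_combination -hj

variable {P : Matrix ι ι ℝ} {l : ℝ}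

theorem mulVec_apply_le_of_mem_rowStochastic (hP : P ∈ rowStochastic ℝ ι) {u : ι → ℝ} {c : ℝ}
    (hu : ∀ k, u k ≤ c) (j : ι) : (P *ᵥ u) j ≤ c :=
  dotProduct_le_of_forall_le (fun _ => nonneg_of_mem_rowStochastic hP)
    (sum_row_of_mem_rowStochastic hP j) hu

theorem le_mulVec_apply_of_mem_rowStochastic (hP : P ∈ rowStochastic ℝ ι) {u : ι → ℝ} {c : ℝ}
    (hu : ∀ k, c ≤ u k) (j : ι) : c ≤ (P *ᵥ u) j :=
  le_dotProduct_of_forall_le (fun _ => nonneg_of_mem_rowStochastic hP)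
    (sum_row_of_mem_rowStochastic hP j) hu

theorem apply_eq_of_one_sub_smul_mulVec_eq {u f : ι → ℝ} (hu : (1 - l • P) *ᵥ u = f) (j : ι) :
    u j = f j + l * (P *ᵥ u) j := by
  rw [← hu, sub_mulVec, one_mulVec, smul_mulVec]
  simp

theorem nonneg_of_nonneg_one_sub_smul_mulVec (hP : P ∈ rowStochastic ℝ ι) (hl0 : 0 ≤ l)
    (hl1 : l < 1) {u : ι → ℝ} (hu : 0 ≤ (1 - l • P) *ᵥ u) : 0 ≤ u := by
  intro j
  have : Nonempty ι := ⟨j⟩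
  obtain ⟨j₀, hj₀⟩ := Finite.exists_min u
  have hj₀u := apply_eq_of_one_sub_smul_mulVec_eq (P := P) (l := l) (u := u) rfl j₀
  have hPu := mul_le_mul_of_nonneg_left (le_mulVec_apply_of_mem_rowStochastic hP hj₀ j₀) hl0
  have hmin : l * u j₀ ≤ u j₀ := by linarith [show (0 : ℝ) ≤ _ from hu j₀]
  exact (by nlinarith : 0 ≤ u j₀).trans (hj₀ j)

theorem isUnit_one_sub_smul_of_mem_rowStochastic (hP : P ∈ rowStochastic ℝ ι) (hl0 : 0 ≤ l)
    (hl1 : l < 1) : IsUnit (1 - l • P) := by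
  rw [← mulVec_injective_iff_isUnit]
  intro x y hxy
  have hsub : (1 - l • P) *ᵥ (x - y) = 0 := by rw [mulVec_sub, hxy, sub_self]
  have hsub' : (1 - l • P) *ᵥ (y - x) = 0 := by rw [mulVec_sub, hxy, sub_self]
  exact le_antisymm
    (sub_nonneg.1 (nonneg_of_nonneg_one_sub_smul_mulVec hP hl0 hl1 hsub'.ge))
    (sub_nonneg.1 (nonneg_of_nonneg_one_sub_smul_mulVec hP hl0 hl1 hsub.ge))

theorem apply_le_of_one_sub_smul_mulVec_eq_single (hP : P ∈ rowStochastic ℝ ι) (hl0 : 0 ≤ l)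
    (hl1 : l < 1) {u : ι → ℝ} {m : ι} (hu : (1 - l • P) *ᵥ u = Pi.single m 1) (j : ι) :
    u j ≤ u m := by
  have : Nonempty ι := ⟨j⟩
  obtain ⟨j₀, hj₀⟩ := Finite.exists_max u
  obtain rfl | hj₀m := eq_or_ne j₀ m
  · exact hj₀ j
  have hu0 : 0 ≤ u :=
    nonneg_of_nonneg_one_sub_smul_mulVec hP hl0 hl1 (hu ▸ Pi.single_nonneg.2 zero_le_one)
  have hj₀u := apply_eq_of_one_sub_smul_mulVec_eq hu j₀
  rw [Pi.single_eq_of_ne hj₀m, zero_add] at hj₀u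
  have hPu := mul_le_mul_of_nonneg_left (mulVec_apply_le_of_mem_rowStochastic hP hj₀ j₀) hl0
  have hmax : u j₀ ≤ 0 := by nlinarith
  linarith [hj₀ j, show (0 : ℝ) ≤ u m from hu0 m]

theorem inv_one_sub_smul_apply_le_apply_diag (hP : P ∈ rowStochastic ℝ ι) (hl0 : 0 ≤ l)
    (hl1 : l < 1) (j m : ι) : (1 - l • P)⁻¹ j m ≤ (1 - l • P)⁻¹ m m := by
  have hA := (isUnit_iff_isUnit_det _).1 (isUnit_one_sub_smul_of_mem_rowStochastic hP hl0 hl1)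
  have hcol : (1 - l • P) *ᵥ ((1 - l • P)⁻¹ *ᵥ Pi.single m 1) = Pi.single m 1 := by
    rw [mulVec_mulVec, mul_nonsing_inv _ hA, one_mulVec]
  simpa [mulVec_single_one] using apply_le_of_one_sub_smul_mulVec_eq_single hP hl0 hl1 hcol j

end Matrix

theorem stmt_15_general (n : ℕ) (P : Matrix (Fin n) (Fin n) ℝ)
    (hnonneg : ∀ i j, 0 ≤ P i j) (hrow : ∀ i, ∑ j, P i j = 1)
    (l : ℝ) (hl0 : 0 < l) (hl1 : l < 1)
    (v : Fin n → ℝ) (hv : ∀ i, 0 < v i) (hv1 : ∑ i, v i = 1)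
    (G : Matrix (Fin n) (Fin n) ℝ)
    (hG : ∀ i j, G i j = l * P i j + (1 - l) * v j)
    (π : Fin n → ℝ) (hπ1 : ∑ i, π i = 1)
    (hfix : Matrix.vecMul π G = π)
    (X : Matrix (Fin n) (Fin n) ℝ) (hX : X = (1 - l) • (1 - l • P)⁻¹) :
    ∀ i : Fin n,
      Finset.univ.inf' ⟨i, Finset.mem_univ i⟩ (fun j => X j i) ≤ π i ∧
      π i ≤ X i i := by
  intro i
  have hP : P ∈ rowStochastic ℝ (Fin n) := mem_rowStochastic_iff_sum.2 ⟨hnonneg, hrow⟩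
  have hA := (isUnit_iff_isUnit_det _).1 (isUnit_one_sub_smul_of_mem_rowStochastic hP hl0.le hl1)
  have hπX : π = v ᵥ* X := by
    rw [hX, vecMul_smul, ← smul_vecMul, ← vecMul_one_sub_smul_eq_of_vecMul_eq_self hG hπ1 hfix,
      vecMul_vecMul, mul_nonsing_inv _ hA, vecMul_one]
  have hπi : π i = v ⬝ᵥ fun j => X j i := by rw [hπX]; rfl
  have hv0 : ∀ j, 0 ≤ v j := fun j => (hv j).le
  rw [hπi]
  refine ⟨le_dotProduct_of_forall_le hv0 hv1 fun j => inf'_le _ (mem_univ j),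
    dotProduct_le_of_forall_le hv0 hv1 fun j => ?_⟩
  simp only [hX, Matrix.smul_apply, smul_eq_mul]
  exact mul_le_mul_of_nonneg_left (inv_one_sub_smul_apply_le_apply_diag hP hl0.le hl1 j i)
    (sub_nonneg.2 hl1.le)

theorem stmt_15 (n : ℕ) (P : Matrix (Fin n) (Fin n) ℝ)
    (hnonneg : ∀ i j, 0 ≤ P i j) (hrow : ∀ i, ∑ j, P i j = 1)
    (l : ℝ) (hl0 : 0 < l) (hl1 : l < 1)
    (v : Fin n → ℝ) (hv : ∀ i, 0 < v i) (hv1 : ∑ i, v i = 1)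
    (G : Matrix (Fin n) (Fin n) ℝ)
    (hG : ∀ i j, G i j = l * P i j + (1 - l) * v j)
    (π : Fin n → ℝ) (hπpos : ∀ i, 0 < π i) (hπ1 : ∑ i, π i = 1)
    (hfix : Matrix.vecMul π G = π)
    (X : Matrix (Fin n) (Fin n) ℝ) (hX : X = (1 - l) • (1 - l • P)⁻¹) :
    ∀ i : Fin n,
      Finset.univ.inf' ⟨i, Finset.mem_univ i⟩ (fun j => X j i) ≤ π i ∧
      π i ≤ X i i :=
  stmt_15_general n P hnonneg hrow l hl0 hl1 v hv hv1 G hG π hπ1 hfix X hX
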